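/- In the same universal extended Frobenius algebra, setting κ_r = 2x − h + [α] for any unit α of level r, one has κ_r · κ_{r'} = m(Δ(κ_{min(r,r')})) in V, i.e. the product of the handle elements of levels r and r' equals m∘Δ applied to the handle element of the minimal level. -/

import Mathlib

noncomputable section

open MvPolynomial

/-- `U_p ⊆ ℤ_pˣ`: the units of `ℤ_p` which are `≡ 1 mod p` (the kernel of reduction
of units mod `p`). -/
def Up (p : ℕ) [Fact p.Prime] : Subgroup ℤ_[p]ˣ :=
  MonoidHom.ker (Units.map (PadicInt.toZMod (p := p)).toMonoidHom)

/-- The underlying `p`-adic integer of an element of `U_p`. -/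
def upVal {p : ℕ} [Fact p.Prime] (u : Up p) : ℤ_[p] := ((u : ℤ_[p]ˣ) : ℤ_[p])

/-- `u` and `v` have the same level: for all `r`, `p^r ∣ u - 1 ↔ p^r ∣ v - 1`. -/
def SameLevel {p : ℕ} [Fact p.Prime] (u v : Up p) : Prop :=
  ∀ r : ℕ, ((p : ℤ_[p]) ^ r ∣ (upVal u - 1) ↔ (p : ℤ_[p]) ^ r ∣ (upVal v - 1))

/-- `w` has level `min(level u, level v)`. -/
def MinLevel {p : ℕ} [Fact p.Prime] (w u v : Up p) : Prop :=
  ∀ r : ℕ, ((p : ℤ_[p]) ^ r ∣ (upVal w - 1) ↔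
    ((p : ℤ_[p]) ^ r ∣ (upVal u - 1) ∧ (p : ℤ_[p]) ^ r ∣ (upVal v - 1)))

/-- The group ring `ℤ[h,t]U_p`. -/
abbrev GrpRing (p : ℕ) [Fact p.Prime] : Type :=
  MonoidAlgebra (MvPolynomial (Fin 2) ℤ) (Up p)

/-- The image `[α]` of `α ∈ U_p` in the group ring. -/
def cls' {p : ℕ} [Fact p.Prime] (u : Up p) : GrpRing p :=
  MonoidAlgebra.of (MvPolynomial (Fin 2) ℤ) (Up p) u

/-- The variable `h` in the group ring. -/
def hGR (p : ℕ) [Fact p.Prime] : GrpRing p :=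
  algebraMap (MvPolynomial (Fin 2) ℤ) (GrpRing p) (X 0)

/-- The variable `t` in the group ring. -/
def tGR (p : ℕ) [Fact p.Prime] : GrpRing p :=
  algebraMap (MvPolynomial (Fin 2) ℤ) (GrpRing p) (X 1)

/-- The ideal `I` generated by `[α][α'] − h([α]+[α']−[min{α,α'}])`,
`[α₁]−[α₂]` for units of equal level, and `2[α]`. -/
def Irel (p : ℕ) [Fact p.Prime] : Ideal (GrpRing p) :=
  Ideal.span
    ({x | ∃ u v w : Up p, MinLevel w u v ∧
        x = cls' u * cls' v - hGR p * (cls' u + cls' v - cls' w)} ∪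
     {x | ∃ u v : Up p, SameLevel u v ∧ x = cls' u - cls' v} ∪
     {x | ∃ u : Up p, x = 2 * cls' u})

/-- `R = ℤ[h,t]U_p/I`. -/
abbrev RU (p : ℕ) [Fact p.Prime] : Type := GrpRing p ⧸ Irel p

/-- `[α]` in `R`. -/
def cls {p : ℕ} [Fact p.Prime] (u : Up p) : RU p := Ideal.Quotient.mk (Irel p) (cls' u)
/-- `h` in `R`. -/
def hR (p : ℕ) [Fact p.Prime] : RU p := Ideal.Quotient.mk (Irel p) (hGR p)
/-- `t` in `R`. -/
def tR (p : ℕ) [Fact p.Prime] : RU p := Ideal.Quotient.mk (Irel p) (tGR p)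

/-- `V = R ⊕ Rx`; `(A,B)` stands for `A + Bx`. -/
abbrev VU (p : ℕ) [Fact p.Prime] : Type := RU p × RU p

/-- `m(A+Bx, C+Dx) = AC + BDt + (AD+BC+BDh)x`. -/
def mU {p : ℕ} [Fact p.Prime] (v w : VU p) : VU p :=
  (v.1 * w.1 + v.2 * w.2 * tR p, v.1 * w.2 + v.2 * w.1 + v.2 * w.2 * hR p)

/-- `φ_α(A + Bx) = A + B[α] + Bx`. -/
def phiU {p : ℕ} [Fact p.Prime] (u : Up p) (v : VU p) : VU p :=
  (v.1 + v.2 * cls u, v.2)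

/-- The basis element `1` of `V`. -/
def oneU (p : ℕ) [Fact p.Prime] : VU p := (1, 0)
/-- The basis element `x` of `V`. -/
def xU (p : ℕ) [Fact p.Prime] : VU p := (0, 1)

/-- `m ∘ Δ`, computed by linearity from `Δ(1) = 1⊗x + x⊗1 − h·1⊗1` and
`Δ(x) = x⊗x + t·1⊗1`. -/
def smulU {p : ℕ} [Fact p.Prime] (c : RU p) (v : VU p) : VU p := (c * v.1, c * v.2)

def mDeltaU {p : ℕ} [Fact p.Prime] (v : VU p) : VU p :=
  smulU v.1 (mU (oneU p) (xU p) + mU (xU p) (oneU p) - smulU (hR p) (mU (oneU p) (oneU p))) +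
    smulU v.2 (mU (xU p) (xU p) + smulU (tR p) (mU (oneU p) (oneU p)))

/-- The handle element `κ_r = 2x − h + [α]` for `α` a unit of level `r`. -/
def kappaU {p : ℕ} [Fact p.Prime] (u : Up p) : VU p := (cls u - hR p, 2)

/-! In `R` the relation `2[α] = 0` makes both `x`-coefficients vanish, and the relation
`[α][α'] = h([α] + [α'] - [min{α,α'}])` turns the constant term `([α] - h)([α'] - h) + 4t` of the
product into `4t + h² - h[min{α,α'}]`, which is the constant term of `m(Δ(κ_min))`. -/

theorem two_mul_cls {p : ℕ} [Fact p.Prime] (u : Up p) : (2 : RU p) * cls u = 0 := by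
  have h : Ideal.Quotient.mk (Irel p) (2 * cls' u) = 0 :=
    Ideal.Quotient.eq_zero_iff_mem.mpr (Ideal.subset_span (Or.inr ⟨u, rfl⟩))
  simpa only [cls, map_mul, map_ofNat] using h

theorem cls_mul_cls {p : ℕ} [Fact p.Prime] {u v w : Up p} (hw : MinLevel w u v) :
    cls u * cls v = hR p * (cls u + cls v - cls w) := by
  have h : Ideal.Quotient.mk (Irel p)
      (cls' u * cls' v - hGR p * (cls' u + cls' v - cls' w)) = 0 :=
    Ideal.Quotient.eq_zero_iff_mem.mpr (Ideal.subset_span (Or.inl (Or.inl ⟨u, v, w, hw, rfl⟩)))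
  simpa only [cls, hR, map_sub, map_mul, map_add, sub_eq_zero] using h

theorem mDeltaU_apply {p : ℕ} [Fact p.Prime] (v : VU p) :
    mDeltaU v = (2 * tR p * v.2 - hR p * v.1, 2 * v.1 + hR p * v.2) := by
  simp only [mDeltaU, mU, smulU, oneU, xU, Prod.mk_add_mk, Prod.mk_sub_mk, Prod.mk.injEq]
  constructor <;> ring

/-- `κ_r · κ_{r'} = (m∘Δ)(κ_{min(r,r')})`: for units `u, v` and `w` of minimal level,
`mU (κ u) (κ v) = (m∘Δ)(κ w)`. -/
theorem kappaU_mul (p : ℕ) [Fact p.Prime] (u v w : Up p) (hw : MinLevel w u v) :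
    mU (kappaU u) (kappaU v) = mDeltaU (kappaU w) := by
  rw [mDeltaU_apply]
  simp only [mU, kappaU, Prod.mk.injEq]
  constructor
  · linear_combination cls_mul_cls hw
  · linear_combination two_mul_cls u + two_mul_cls v - two_mul_cls w

end
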